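/- arXiv:2510.03622 — 3 statements merged into one kernel-verified Lean document; each statement's English description precedes it below -/
import Mathlib

section
/- For all types a, c ∈ Ty, the set of parallel products {ρ ⊛ σ : ρ ∈ L(a), σ ∈ L(c)} spans the complex vector space L(a ⊛ c). -/
inductive Ty (Λ : Type) : Type
  | elem : List Λ → Ty Λ
  | arrow : Ty Λ → Ty Λ → Ty Λ

namespace Ty

variable {Λ : Type}

def ord : Ty Λ → ℕ
  | elem _ => 0
  | arrow a b => 1 + max a.ord b.ord

def par : Ty Λ → Ty Λ → Ty Λ
  | elem v, elem w => elem (v ++ w)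
  | elem v, arrow c d => arrow c (par (elem v) d)
  | arrow a b, elem w => arrow a (par b (elem w))
  | arrow a b, arrow c d =>
    if (arrow a b).ord < (arrow c d).ord then arrow c (par (arrow a b) d)
    else if (arrow a b).ord = (arrow c d).ord then arrow (par a c) (par b d)
    else arrow a (par b (arrow c d))

theorem ord_par (x y : Ty Λ) : (x.par y).ord = max x.ord y.ord := by
  induction x, y using par.induct with
  | case1 v w => simp [par, ord]
  | case2 v c d ih => simp_all [par, ord]
  | case3 a b w ih => simp_all [par, ord]
  | case4 a b c d h ih => rw [par, if_pos h]; simp_all [ord]; omega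
  | case5 a b c d h1 h2 ih1 ih2 => rw [par, if_neg h1, if_pos h2]; simp_all [ord]; omega
  | case6 a b c d h1 h2 ih => rw [par, if_neg h1, if_neg h2]; simp_all [ord]; omega

theorem par_elem_elem (v w : List Λ) : (elem v).par (elem w) = elem (v ++ w) := by
  rw [par]

theorem par_arrow_arrow {a b c d : Ty Λ} (h : (arrow a b).ord = (arrow c d).ord) :
    (arrow a b).par (arrow c d) = arrow (a.par c) (b.par d) := by
  rw [par, if_neg (by omega), if_pos h]

theorem par_lt {x c d : Ty Λ} (h : x.ord < (arrow c d).ord) :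
    x.par (arrow c d) = arrow c (x.par d) := by
  cases x with
  | elem v => rw [par]
  | arrow a b => rw [par, if_pos h]

theorem par_gt {a b y : Ty Λ} (h : y.ord < (arrow a b).ord) :
    (arrow a b).par y = arrow a (b.par y) := by
  cases y with
  | elem w => rw [par]
  | arrow c d => rw [par, if_neg (by omega), if_neg (by omega)]

end Ty
namespace HigherOrder

open scoped TensorProduct ComplexOrder

variable {Λ : Type} (dm : Λ → ℕ)

def dimw (w : List Λ) : ℕ := (w.map dm).prod

theorem dimw_append (v w : List Λ) : dimw dm (v ++ w) = dimw dm v * dimw dm w := by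
  simp [dimw]

noncomputable def L : Ty Λ → ModuleCat ℂ
  | .elem w => ModuleCat.of ℂ (Matrix (Fin (dimw dm w)) (Fin (dimw dm w)) ℂ)
  | .arrow a b => ModuleCat.of ℂ (↑(L a) →ₗ[ℂ] ↑(L b))

def toHom {a b : Ty Λ} (M : ↑(L dm (Ty.arrow a b))) : ↑(L dm a) →ₗ[ℂ] ↑(L dm b) := M

def ofHom {a b : Ty Λ} (f : ↑(L dm a) →ₗ[ℂ] ↑(L dm b)) : ↑(L dm (Ty.arrow a b)) := f

def toMat {w : List Λ} (A : ↑(L dm (Ty.elem w))) :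
    Matrix (Fin (dimw dm w)) (Fin (dimw dm w)) ℂ := A

def ofMat {w : List Λ} (A : Matrix (Fin (dimw dm w)) (Fin (dimw dm w)) ℂ) :
    ↑(L dm (Ty.elem w)) := A

noncomputable def app {a b : Ty Λ} (M : ↑(L dm (Ty.arrow a b))) (ρ : ↑(L dm a)) : ↑(L dm b) :=
  toHom dm M ρ

instance instFinDimL (x : Ty Λ) : FiniteDimensional ℂ ↑(L dm x) := by
  induction x with
  | elem w => exact inferInstanceAs (FiniteDimensional ℂ (Matrix _ _ ℂ))
  | arrow a b iha ihb => exact inferInstanceAs (FiniteDimensional ℂ (↑(L dm a) →ₗ[ℂ] ↑(L dm b)))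

noncomputable def castL {x y : Ty Λ} (h : x = y) : ↑(L dm x) ≃ₗ[ℂ] ↑(L dm y) :=
  h ▸ LinearEquiv.refl ℂ ↑(L dm x)

/-- `L (arrow a b)` is (by definition) a space of linear maps. -/
noncomputable def homEquivL (a b : Ty Λ) :
    ↑(L dm (Ty.arrow a b)) ≃ₗ[ℂ] (↑(L dm a) →ₗ[ℂ] ↑(L dm b)) :=
  { toFun := toHom dm, invFun := ofHom dm, map_add' := fun _ _ => rfl,
    map_smul' := fun _ _ => rfl, left_inv := fun _ => rfl, right_inv := fun _ => rfl }

/-- `L (elem w)` is (by definition) a space of matrices. -/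
noncomputable def matEquivL (w : List Λ) :
    ↑(L dm (Ty.elem w)) ≃ₗ[ℂ] Matrix (Fin (dimw dm w)) (Fin (dimw dm w)) ℂ :=
  { toFun := toMat dm, invFun := ofMat dm, map_add' := fun _ _ => rfl,
    map_smul' := fun _ _ => rfl, left_inv := fun _ => rfl, right_inv := fun _ => rfl }

/-- The parallel product on the level of spaces: the canonical identification of
`L x ⊗ L y` with `L (x ⊛ y)`. -/
noncomputable def parEquiv : (x y : Ty Λ) →
    (↑(L dm x) ⊗[ℂ] ↑(L dm y)) ≃ₗ[ℂ] ↑(L dm (x.par y))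
  | .elem v, .elem w =>
      (TensorProduct.congr (matEquivL dm v) (matEquivL dm w)) ≪≫ₗ
      ((Matrix.stdBasis ℂ (Fin (dimw dm v)) (Fin (dimw dm v))).tensorProduct
          (Matrix.stdBasis ℂ (Fin (dimw dm w)) (Fin (dimw dm w)))).equiv
        (Matrix.stdBasis ℂ (Fin (dimw dm v) × Fin (dimw dm w))
          (Fin (dimw dm v) × Fin (dimw dm w)))
        (Equiv.prodProdProdComm _ _ _ _) ≪≫ₗ
      Matrix.reindexLinearEquiv ℂ ℂ finProdFinEquiv finProdFinEquiv ≪≫ₗ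
      Matrix.reindexLinearEquiv ℂ ℂ (finCongr (dimw_append dm v w).symm)
        (finCongr (dimw_append dm v w).symm) ≪≫ₗ
      (matEquivL dm (v ++ w)).symm ≪≫ₗ
      castL dm (Ty.par_elem_elem v w).symm
  | .elem v, .arrow c d =>
      (TensorProduct.congr (LinearEquiv.refl ℂ _) (homEquivL dm c d)) ≪≫ₗ
      lTensorHomEquivHomLTensor ℂ ↑(L dm c) ↑(L dm (Ty.elem v)) ↑(L dm d) ≪≫ₗ
      LinearEquiv.arrowCongr (LinearEquiv.refl ℂ _) (parEquiv (Ty.elem v) d) ≪≫ₗ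
      (homEquivL dm c ((Ty.elem v).par d)).symm ≪≫ₗ
      castL dm (Ty.par_lt (by simp [Ty.ord])).symm
  | .arrow a b, .elem w =>
      (TensorProduct.congr (homEquivL dm a b) (LinearEquiv.refl ℂ _)) ≪≫ₗ
      rTensorHomEquivHomRTensor ℂ ↑(L dm a) ↑(L dm b) ↑(L dm (Ty.elem w)) ≪≫ₗ
      LinearEquiv.arrowCongr (LinearEquiv.refl ℂ _) (parEquiv b (Ty.elem w)) ≪≫ₗ
      (homEquivL dm a (b.par (Ty.elem w))).symm ≪≫ₗ
      castL dm (Ty.par_gt (by simp [Ty.ord])).symm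
  | .arrow a b, .arrow c d =>
      if h : (Ty.arrow a b).ord < (Ty.arrow c d).ord then
        (TensorProduct.congr (LinearEquiv.refl ℂ _) (homEquivL dm c d)) ≪≫ₗ
        lTensorHomEquivHomLTensor ℂ ↑(L dm c) ↑(L dm (Ty.arrow a b)) ↑(L dm d) ≪≫ₗ
        LinearEquiv.arrowCongr (LinearEquiv.refl ℂ _) (parEquiv (Ty.arrow a b) d) ≪≫ₗ
        (homEquivL dm c ((Ty.arrow a b).par d)).symm ≪≫ₗ
        castL dm (Ty.par_lt h).symm
      else if h2 : (Ty.arrow a b).ord = (Ty.arrow c d).ord then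
        (TensorProduct.congr (homEquivL dm a b) (homEquivL dm c d)) ≪≫ₗ
        homTensorHomEquiv ℂ ↑(L dm a) ↑(L dm c) ↑(L dm b) ↑(L dm d) ≪≫ₗ
        LinearEquiv.arrowCongr (parEquiv a c) (parEquiv b d) ≪≫ₗ
        (homEquivL dm (a.par c) (b.par d)).symm ≪≫ₗ
        castL dm (Ty.par_arrow_arrow h2).symm
      else
        (TensorProduct.congr (homEquivL dm a b) (LinearEquiv.refl ℂ _)) ≪≫ₗ
        rTensorHomEquivHomRTensor ℂ ↑(L dm a) ↑(L dm b) ↑(L dm (Ty.arrow c d)) ≪≫ₗ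
        LinearEquiv.arrowCongr (LinearEquiv.refl ℂ _) (parEquiv b (Ty.arrow c d)) ≪≫ₗ
        (homEquivL dm a (b.par (Ty.arrow c d))).symm ≪≫ₗ
        castL dm (Ty.par_gt (by omega)).symm

/-- The parallel product of higher-order maps. -/
noncomputable def parMap {x y : Ty Λ} (M : ↑(L dm x)) (N : ↑(L dm y)) : ↑(L dm (x.par y)) :=
  parEquiv dm x y (M ⊗ₜ[ℂ] N)

/-- The identity map, as an element of `L (z → z)`. -/
noncomputable def idL (z : Ty Λ) : ↑(L dm (Ty.arrow z z)) :=
  ofHom dm (LinearMap.id)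

/-- The family of sets of Hermitian / Hs-preserving maps. -/
noncomputable def Hs : (x : Ty Λ) → Set ↑(L dm x)
  | .elem w => {A | (toMat dm A).IsHermitian}
  | .arrow a b => {M | ∀ ρ ∈ Hs a, app dm M ρ ∈ Hs b}

/-- The family of cones of positive semidefinite / completely K-preserving maps. -/
noncomputable def K : (x : Ty Λ) → Set ↑(L dm x)
  | .elem _ => {A | (toMat dm A).PosSemidef}
  | .arrow a b => {M | ∀ z : Ty Λ, ∀ hz : (Ty.arrow z z).ord = (Ty.arrow a b).ord,
      ∀ ρ ∈ K (a.par z),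
        app dm (castL dm (Ty.par_arrow_arrow hz.symm) (parMap dm M (idL dm z))) ρ ∈ K (b.par z)}
  termination_by x => x.ord
  decreasing_by
  all_goals (simp only [Ty.ord_par, Ty.ord] at hz ⊢; omega)

end HigherOrder

theorem LinearMap.span_image_tmul_eq_top_of_surjective {R M N P : Type*} [CommSemiring R]
    [AddCommMonoid M] [AddCommMonoid N] [AddCommMonoid P] [Module R M] [Module R N] [Module R P]
    {f : TensorProduct R M N →ₗ[R] P} (hf : Function.Surjective f) :
    Submodule.span R {p : P | ∃ (m : M) (n : N), p = f (TensorProduct.tmul R m n)} = ⊤ := by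
  have image_tmul : {p : P | ∃ (m : M) (n : N), p = f (TensorProduct.tmul R m n)} =
      f '' {t | ∃ m n, TensorProduct.tmul R m n = t} := by
    ext p
    constructor
    · rintro ⟨m, n, rfl⟩
      exact ⟨_, ⟨m, n, rfl⟩, rfl⟩
    · rintro ⟨_, ⟨m, n, rfl⟩, rfl⟩
      exact ⟨m, n, rfl⟩
  rw [image_tmul, ← Submodule.map_span, TensorProduct.span_tmul_eq_top, Submodule.map_top,
    LinearMap.range_eq_top.mpr hf]

open HigherOrder in
/-- The parallel products `ρ ⊛ σ` of maps `ρ : a` and `σ : c` span `L (a ⊛ c)`. -/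
theorem span_parMap_eq_top {Λ : Type} (dm : Λ → ℕ) (a c : Ty Λ) :
    Submodule.span ℂ
      {m : ↑(L dm (a.par c)) | ∃ (ρ : ↑(L dm a)) (σ : ↑(L dm c)), m = parMap dm ρ σ} = ⊤ :=
  LinearMap.span_image_tmul_eq_top_of_surjective (parEquiv dm a c).surjective
end

section
/- Let x = a → b be a type and M : x. Then M is Hs-preserving (i.e. M ∈ Hs(x)) if and only if M is completely Hs-preserving, meaning that (M ⊛ id_{L(z)})(ρ) ∈ Hs(b ⊛ z) for every type z with ord(z → z) = ord(x) and every ρ ∈ Hs(a ⊛ z). -/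
/-!
Every space `L x` carries a conjugation `conj x`: the adjoint on operators and
`M ↦ conj ∘ M ∘ conj` on maps. By polarisation `Hs x` is exactly its fixed-point set, and by
induction along the definition of `⊛` the conjugation commutes with the parallel product. So if
`M` is Hs-preserving, `M ⊛ id` is fixed by `conj`, i.e. Hs-preserving. Conversely, take `z` of the
right order with a nonzero Hermitian `e : z` (the identity of `z → z`, say); then
`(M ⊛ id)(ρ ⊛ e) = M ρ ⊛ e` is Hermitian for Hermitian `ρ`, and as `- ⊗ e` is injective,
so is `M ρ`.
-/

open scoped TensorProduct Matrix Kronecker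

theorem Matrix.stdBasis_tensorProduct_equiv_apply {R l m n p : Type*} [CommSemiring R]
    [Fintype l] [Fintype m] [Fintype n] [Fintype p]
    [DecidableEq l] [DecidableEq m] [DecidableEq n] [DecidableEq p]
    (t : Matrix l m R ⊗[R] Matrix n p R) :
    ((stdBasis R l m).tensorProduct (stdBasis R n p)).equiv (stdBasis R (l × n) (m × p))
      (Equiv.prodProdProdComm l m n p) t = kroneckerLinearEquiv l m n p R t := by
  refine LinearMap.congr_fun (Module.Basis.ext
    (b := (stdBasis R l m).tensorProduct (stdBasis R n p)) ?_) t
  rintro ⟨⟨i, j⟩, k, k'⟩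
  simp only [LinearEquiv.coe_coe, Module.Basis.equiv_apply, Equiv.prodProdProdComm_apply]
  simp [stdBasis_eq_single, single_kronecker_single]

theorem TensorProduct.tmul_left_injective_of_ne_zero {K V W : Type*} [Field K]
    [AddCommGroup V] [Module K V] [AddCommGroup W] [Module K W] {w : W} (hw : w ≠ 0) :
    Function.Injective fun v : V => v ⊗ₜ[K] w := by
  obtain ⟨φ, hφ⟩ := Module.Projective.exists_dual_eq_one K hw
  intro v v' h
  simpa [hφ] using congrArg (TensorProduct.rid K V ∘ LinearMap.lTensor V φ) h

/-- Polarisation: `v + c v` and `i (v - c v)` are fixed by `c`, and together they recover `v`. -/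
theorem LinearMap.mapsTo_fixedPoints_iff {V W : Type*} [AddCommGroup V] [Module ℂ V]
    [AddCommGroup W] [Module ℂ W] (cV : V ≃ₗ⋆[ℂ] V) (cW : W ≃ₗ⋆[ℂ] W)
    (hV : Function.Involutive cV) (f : V →ₗ[ℂ] W) :
    Set.MapsTo f (Function.fixedPoints cV) (Function.fixedPoints cW) ↔
      ∀ v, cW (f (cV v)) = f v := by
  refine ⟨fun hf v => ?_,
    fun hf v (hv : cV v = v) => show cW (f v) = f v by simpa [hv] using hf v⟩
  have hre := (hf (x := v + cV v) (by rw [Function.mem_fixedPoints, Function.IsFixedPt,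
    map_add, hV, add_comm])).eq
  have him := (hf (x := Complex.I • (v - cV v)) (by rw [Function.mem_fixedPoints,
    Function.IsFixedPt, map_smulₛₗ, map_sub, hV, Complex.conj_I, neg_smul, ← smul_neg,
    neg_sub])).eq
  rw [map_add, map_add] at hre
  rw [map_smul, map_sub, map_smulₛₗ, map_sub, Complex.conj_I, neg_smul, ← smul_neg,
    neg_sub] at him
  linear_combination (norm := module)
    (1 / 2 : ℂ) • hre + (1 / 2 : ℂ) • smul_right_injective W Complex.I_ne_zero him

namespace Ty

variable {Λ : Type}

def trivialOfOrd : ℕ → Ty Λ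
  | 0 => elem []
  | n + 1 => arrow (trivialOfOrd n) (trivialOfOrd n)

theorem ord_trivialOfOrd (n : ℕ) : (trivialOfOrd n : Ty Λ).ord = n := by
  induction n with
  | zero => rfl
  | succ n ih => simp [trivialOfOrd, ord, ih, Nat.add_comm]

end Ty

namespace HigherOrder

variable {Λ : Type} (dm : Λ → ℕ)

theorem castL_castL {x y : Ty Λ} (h : x = y) (v : ↑(L dm y)) :
    castL dm h (castL dm h.symm v) = v := by subst h; rfl

theorem hom_ext {a b : Ty Λ} {M N : ↑(L dm (.arrow a b))}
    (h : ∀ ρ, app dm M ρ = app dm N ρ) : M = N :=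
  LinearMap.ext h

theorem app_idL {z : Ty Λ} (ρ : ↑(L dm z)) : app dm (idL dm z) ρ = ρ := rfl

noncomputable def conj : (x : Ty Λ) → ↑(L dm x) ≃ₗ⋆[ℂ] ↑(L dm x)
  | .elem w => (matEquivL dm w).trans
      ((Matrix.conjTransposeLinearEquiv _ _ ℂ ℂ).trans (matEquivL dm w).symm)
  | .arrow a b => (homEquivL dm a b).trans
      ((LinearEquiv.arrowCongr (conj a) (conj b)).trans (homEquivL dm a b).symm)

theorem toMat_conj {w : List Λ} (A : ↑(L dm (.elem w))) :
    toMat dm (conj dm _ A) = (toMat dm A)ᴴ := rfl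

theorem conj_conj : ∀ (x : Ty Λ) (v : ↑(L dm x)), conj dm x (conj dm x v) = v
  | .elem _, A => Matrix.conjTranspose_conjTranspose (toMat dm A)
  | .arrow a b, M => hom_ext dm fun ρ => by
    change conj dm b (conj dm b (app dm M ((conj dm a).symm ((conj dm a).symm ρ)))) = _
    rw [conj_conj b]
    congr 1
    rw [LinearEquiv.symm_apply_eq, LinearEquiv.symm_apply_eq, conj_conj a]

theorem conj_symm (x : Ty Λ) : (conj dm x).symm = conj dm x :=
  LinearEquiv.ext fun v => (LinearEquiv.symm_apply_eq _).mpr (conj_conj dm x v).symm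

theorem app_conj {a b : Ty Λ} (M : ↑(L dm (.arrow a b))) (ρ : ↑(L dm a)) :
    app dm (conj dm _ M) ρ = conj dm b (app dm M (conj dm a ρ)) := by
  rw [← conj_symm dm a]
  rfl

theorem conj_castL {x y : Ty Λ} (h : x = y) (v : ↑(L dm x)) :
    conj dm y (castL dm h v) = castL dm h (conj dm x v) := by subst h; rfl

theorem conj_idL (z : Ty Λ) : conj dm _ (idL dm z) = idL dm z :=
  hom_ext dm fun ρ => by rw [app_conj, app_idL, app_idL, conj_conj]

theorem mem_Hs_iff : ∀ {x : Ty Λ} {v : ↑(L dm x)}, v ∈ Hs dm x ↔ conj dm x v = v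
  | .elem _, _ => Iff.rfl
  | .arrow a b, M => by
    change (∀ ρ ∈ Hs dm a, app dm M ρ ∈ Hs dm b) ↔ _
    simp only [mem_Hs_iff]
    refine (LinearMap.mapsTo_fixedPoints_iff (conj dm a) (conj dm b)
      (conj_conj dm a) (toHom dm M)).trans ?_
    refine ⟨fun h => hom_ext dm fun ρ => by rw [app_conj]; exact h ρ,
      fun h ρ => (app_conj dm M ρ).symm.trans (by rw [h]; rfl)⟩

theorem toMat_castL_parMap_elem {v w : List Λ} (A : ↑(L dm (.elem v)))
    (B : ↑(L dm (.elem w))) :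
    toMat dm (castL dm (Ty.par_elem_elem v w) (parMap dm A B)) =
      Matrix.reindex (finProdFinEquiv.trans (finCongr (dimw_append dm v w).symm))
        (finProdFinEquiv.trans (finCongr (dimw_append dm v w).symm))
        (toMat dm A ⊗ₖ toMat dm B) := by
  simp only [parMap, parEquiv, LinearEquiv.trans_apply, castL_castL, TensorProduct.congr_tmul,
    Matrix.stdBasis_tensorProduct_equiv_apply, kroneckerLinearEquiv_tmul]
  rfl

theorem app_parMap_of_ord_eq {a b c d : Ty Λ} (h : (Ty.arrow a b).ord = (Ty.arrow c d).ord)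
    (M : ↑(L dm (.arrow a b))) (N : ↑(L dm (.arrow c d)))
    (ρ : ↑(L dm a)) (σ : ↑(L dm c)) :
    app dm (castL dm (Ty.par_arrow_arrow h) (parMap dm M N)) (parMap dm ρ σ) =
      parMap dm (app dm M ρ) (app dm N σ) := by
  simp only [parMap, parEquiv, dif_neg h.not_lt, dif_pos h, LinearEquiv.trans_apply, castL_castL,
    TensorProduct.congr_tmul, homTensorHomEquiv_apply]
  change parEquiv dm b d (TensorProduct.map (toHom dm M) (toHom dm N)
    ((parEquiv dm a c).symm (parEquiv dm a c (ρ ⊗ₜ σ)))) = _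
  rw [LinearEquiv.symm_apply_apply, TensorProduct.map_tmul]
  rfl

theorem app_parMap_of_ord_lt {x c d : Ty Λ} (h : x.ord < (Ty.arrow c d).ord)
    (M : ↑(L dm x)) (N : ↑(L dm (.arrow c d))) (ρ : ↑(L dm c)) :
    app dm (castL dm (Ty.par_lt h) (parMap dm M N)) ρ = parMap dm M (app dm N ρ) := by
  cases x with
  | elem v =>
    simp only [parMap, parEquiv, LinearEquiv.trans_apply, castL_castL,
      TensorProduct.congr_tmul, lTensorHomEquivHomLTensor_apply]
    rfl
  | arrow a b =>
    simp only [parMap, parEquiv, dif_pos h, LinearEquiv.trans_apply, castL_castL,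
      TensorProduct.congr_tmul, lTensorHomEquivHomLTensor_apply]
    rfl

theorem app_parMap_of_ord_gt {a b y : Ty Λ} (h : y.ord < (Ty.arrow a b).ord)
    (M : ↑(L dm (.arrow a b))) (N : ↑(L dm y)) (ρ : ↑(L dm a)) :
    app dm (castL dm (Ty.par_gt h) (parMap dm M N)) ρ = parMap dm (app dm M ρ) N := by
  cases y with
  | elem w =>
    simp only [parMap, parEquiv, LinearEquiv.trans_apply, castL_castL,
      TensorProduct.congr_tmul, rTensorHomEquivHomRTensor_apply]
    rfl
  | arrow c d =>
    simp only [parMap, parEquiv, dif_neg (lt_asymm h), dif_neg h.ne', LinearEquiv.trans_apply,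
      castL_castL, TensorProduct.congr_tmul, rTensorHomEquivHomRTensor_apply]
    rfl

theorem hom_ext_parMap {a c d : Ty Λ} {F G : ↑(L dm (.arrow (a.par c) d))}
    (h : ∀ ρ σ, app dm F (parMap dm ρ σ) = app dm G (parMap dm ρ σ)) : F = G := by
  have hcomp : (toHom dm F).comp (parEquiv dm a c).toLinearMap =
      (toHom dm G).comp (parEquiv dm a c).toLinearMap :=
    TensorProduct.ext' h
  exact hom_ext dm fun τ => by
    simpa [app] using LinearMap.congr_fun hcomp ((parEquiv dm a c).symm τ)

theorem conj_parMap_elem {v w : List Λ} (A : ↑(L dm (.elem v))) (B : ↑(L dm (.elem w))) :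
    conj dm _ (parMap dm A B) = parMap dm (conj dm _ A) (conj dm _ B) := by
  apply (castL dm (Ty.par_elem_elem v w)).injective
  rw [← conj_castL]
  change toMat dm (conj dm _ _) = toMat dm _
  rw [toMat_conj, toMat_castL_parMap_elem, toMat_castL_parMap_elem, toMat_conj, toMat_conj,
    Matrix.conjTranspose_reindex, Matrix.conjTranspose_kronecker]

theorem conj_parMap_of_ord_lt {x c d : Ty Λ} (h : x.ord < (Ty.arrow c d).ord)
    (ih : ∀ (M : ↑(L dm x)) (N : ↑(L dm d)),
      conj dm _ (parMap dm M N) = parMap dm (conj dm _ M) (conj dm _ N))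
    (M : ↑(L dm x)) (N : ↑(L dm (.arrow c d))) :
    conj dm _ (parMap dm M N) = parMap dm (conj dm _ M) (conj dm _ N) := by
  apply (castL dm (Ty.par_lt h)).injective
  rw [← conj_castL]
  refine hom_ext dm fun ρ => ?_
  rw [app_conj, app_parMap_of_ord_lt dm h, ih, app_parMap_of_ord_lt dm h, app_conj]

theorem conj_parMap_of_ord_gt {a b y : Ty Λ} (h : y.ord < (Ty.arrow a b).ord)
    (ih : ∀ (M : ↑(L dm b)) (N : ↑(L dm y)),
      conj dm _ (parMap dm M N) = parMap dm (conj dm _ M) (conj dm _ N))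
    (M : ↑(L dm (.arrow a b))) (N : ↑(L dm y)) :
    conj dm _ (parMap dm M N) = parMap dm (conj dm _ M) (conj dm _ N) := by
  apply (castL dm (Ty.par_gt h)).injective
  rw [← conj_castL]
  refine hom_ext dm fun ρ => ?_
  rw [app_conj, app_parMap_of_ord_gt dm h, ih, app_parMap_of_ord_gt dm h, app_conj]

theorem conj_parMap_of_ord_eq {a b c d : Ty Λ} (h : (Ty.arrow a b).ord = (Ty.arrow c d).ord)
    (ih_dom : ∀ (ρ : ↑(L dm a)) (σ : ↑(L dm c)),
      conj dm _ (parMap dm ρ σ) = parMap dm (conj dm _ ρ) (conj dm _ σ))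
    (ih_cod : ∀ (M : ↑(L dm b)) (N : ↑(L dm d)),
      conj dm _ (parMap dm M N) = parMap dm (conj dm _ M) (conj dm _ N))
    (M : ↑(L dm (.arrow a b))) (N : ↑(L dm (.arrow c d))) :
    conj dm _ (parMap dm M N) = parMap dm (conj dm _ M) (conj dm _ N) := by
  apply (castL dm (Ty.par_arrow_arrow h)).injective
  rw [← conj_castL]
  refine hom_ext_parMap dm fun ρ σ => ?_
  rw [app_conj, ih_dom, app_parMap_of_ord_eq dm h, ih_cod, app_parMap_of_ord_eq dm h, app_conj,
    app_conj]

theorem conj_parMap (x y : Ty Λ) : ∀ (M : ↑(L dm x)) (N : ↑(L dm y)),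
    conj dm _ (parMap dm M N) = parMap dm (conj dm _ M) (conj dm _ N) := by
  induction x, y using Ty.par.induct with
  | case1 => exact conj_parMap_elem dm
  | case2 v c d ih => exact conj_parMap_of_ord_lt dm (by simp only [Ty.ord]; omega) ih
  | case3 a b w ih => exact conj_parMap_of_ord_gt dm (by simp only [Ty.ord]; omega) ih
  | case4 a b c d h ih => exact conj_parMap_of_ord_lt dm h ih
  | case5 a b c d _ h ih_dom ih_cod => exact conj_parMap_of_ord_eq dm h ih_dom ih_cod
  | case6 a b c d h₁ h₂ ih => exact conj_parMap_of_ord_gt dm (by omega) ih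

theorem parMap_mem_Hs {x y : Ty Λ} {M : ↑(L dm x)} {N : ↑(L dm y)}
    (hM : M ∈ Hs dm x) (hN : N ∈ Hs dm y) : parMap dm M N ∈ Hs dm (x.par y) := by
  rw [mem_Hs_iff] at hM hN ⊢
  rw [conj_parMap, hM, hN]

theorem mem_Hs_of_parMap_mem_Hs {x z : Ty Λ} {v : ↑(L dm x)} {e : ↑(L dm z)}
    (he : e ∈ Hs dm z) (he₀ : e ≠ 0) (h : parMap dm v e ∈ Hs dm (x.par z)) :
    v ∈ Hs dm x := by
  rw [mem_Hs_iff] at he h ⊢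
  rw [conj_parMap, he] at h
  exact TensorProduct.tmul_left_injective_of_ne_zero he₀ ((parEquiv dm x z).injective h)

theorem castL_parMap_idL_mem_Hs {a b z : Ty Λ}
    (hz : (Ty.arrow a b).ord = (Ty.arrow z z).ord) {M : ↑(L dm (.arrow a b))}
    (hM : M ∈ Hs dm (.arrow a b)) :
    castL dm (Ty.par_arrow_arrow hz) (parMap dm M (idL dm z)) ∈ Hs dm _ := by
  rw [mem_Hs_iff] at hM ⊢
  rw [conj_castL, conj_parMap, hM, conj_idL]

noncomputable def unitOfOrd : (n : ℕ) → ↑(L dm (Ty.trivialOfOrd (Λ := Λ) n))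
  | 0 => ofMat dm 1
  | _ + 1 => idL dm _

theorem unitOfOrd_mem_Hs : ∀ n : ℕ, unitOfOrd dm n ∈ Hs dm (Ty.trivialOfOrd (Λ := Λ) n)
  | 0 => Matrix.isHermitian_one
  | _ + 1 => fun _ hρ => hρ

theorem unitOfOrd_ne_zero : ∀ n : ℕ, unitOfOrd dm (Λ := Λ) n ≠ 0
  | 0 => one_ne_zero (α := Matrix (Fin 1) (Fin 1) ℂ)
  | n + 1 => fun h => unitOfOrd_ne_zero n (LinearMap.congr_fun h (unitOfOrd dm n))

end HigherOrder

open HigherOrder in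
/-- A map `M : a → b` is Hs-preserving if and only if it is completely Hs-preserving. -/
theorem Hs_preserving_iff_completely {Λ : Type} (dm : Λ → ℕ) (a b : Ty Λ)
    (M : ↑(L dm (Ty.arrow a b))) :
    M ∈ Hs dm (Ty.arrow a b) ↔
      ∀ (z : Ty Λ) (hz : (Ty.arrow z z).ord = (Ty.arrow a b).ord),
        ∀ ρ ∈ Hs dm (a.par z),
          app dm (castL dm (Ty.par_arrow_arrow hz.symm) (parMap dm M (idL dm z))) ρ ∈
            Hs dm (b.par z) := by
  refine ⟨fun hM z hz => castL_parMap_idL_mem_Hs dm hz.symm hM, fun hcomp ρ hρ => ?_⟩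
  let n := max a.ord b.ord
  have hn : (Ty.arrow (Ty.trivialOfOrd (Λ := Λ) n) (Ty.trivialOfOrd n)).ord =
      (Ty.arrow a b).ord := by
    simp only [Ty.ord, Ty.ord_trivialOfOrd]
    omega
  have h := hcomp _ hn _ (parMap_mem_Hs dm hρ (unitOfOrd_mem_Hs dm n))
  rw [app_parMap_of_ord_eq dm hn.symm, app_idL] at h
  exact mem_Hs_of_parMap_mem_Hs dm (unitOfOrd_mem_Hs dm n) (unitOfOrd_ne_zero dm n) h
end

section
/- Let A and B be elementary types, and suppose the alphabet Λ contains a label C with dim H_C ≥ 2. Then K(A → B) coincides with the set of completely positive maps from End(H_A) to End(H_B) in the standard sense: a linear map M : End(H_A) → End(H_B) belongs to K(A → B) if and only if, for every finite-dimensional complex Hilbert space W and every positive semidefinite operator ρ on H_A ⊗ W, the operator (M ⊗ id_{End(W)})(ρ) on H_B ⊗ W is positive semidefinite. -/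
/-! For elementary `A` and `B`, the types `z` with `ord (z → z) = ord (A → B)` are exactly the
elementary ones, and `L (A ⊛ w)` is the space of matrices indexed by `H_A ⊗ H_w`; so
`M ∈ K (A → B)` says that `M ⊗ id` preserves positivity for every ancilla `H_w`. The dimensions
of these ancillas are products of the `dim H_C`, not arbitrary. But positivity of `M ⊗ id` passes
from an ancilla to any smaller one: a positive matrix on `H_A ⊗ ℂᵏ` is a compression of a positive
matrix on `H_A ⊗ H_w` when `k ≤ dim H_w`, and `M ⊗ id` commutes with such compressions. Since
`dim H_C ≥ 2`, the ancillas `H_{Cᵏ}` are arbitrarily large. -/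

open scoped Kronecker

namespace Matrix

section CommSemiring

variable {R : Type*} [CommSemiring R] {m n ι κ : Type*}

/-- The matrix of `f ⊗ id_ι`, acting on each `ι`-block separately. -/
def sliceMap (f : Matrix m m R →ₗ[R] Matrix n n R) (ι : Type*) :
    Matrix (m × ι) (m × ι) R →ₗ[R] Matrix (n × ι) (n × ι) R where
  toFun ρ := of fun p q => f (of fun s t => ρ (s, p.2) (t, q.2)) p.1 q.1
  map_add' ρ σ := by
    ext p q
    exact congrFun₂
      (f.map_add (of fun s t => ρ (s, p.2) (t, q.2)) (of fun s t => σ (s, p.2) (t, q.2))) p.1 q.1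
  map_smul' c ρ := by
    ext p q
    exact congrFun₂ (f.map_smul c (of fun s t => ρ (s, p.2) (t, q.2))) p.1 q.1

theorem sliceMap_kronecker (f : Matrix m m R →ₗ[R] Matrix n n R) (P : Matrix m m R)
    (Q : Matrix ι ι R) : sliceMap f ι (P ⊗ₖ Q) = f P ⊗ₖ Q := by
  ext ⟨p, i⟩ ⟨q, j⟩
  have hslice : (of fun s t => (P ⊗ₖ Q) (s, i) (t, j)) = Q i j • P := by
    ext s t
    simp [mul_comm]
  change f (of fun s t => (P ⊗ₖ Q) (s, i) (t, j)) p q = _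
  rw [hslice, map_smul]
  simp [mul_comm]

theorem sliceMap_submatrix (f : Matrix m m R →ₗ[R] Matrix n n R) (e : κ → ι)
    (ρ : Matrix (m × ι) (m × ι) R) :
    sliceMap f κ (ρ.submatrix (Prod.map id e) (Prod.map id e)) =
      (sliceMap f ι ρ).submatrix (Prod.map id e) (Prod.map id e) :=
  rfl

theorem stdBasis_tensorProduct_equiv_tmul [Fintype m] [Fintype n] [DecidableEq m]
    [DecidableEq n] (P : Matrix m m R) (Q : Matrix n n R) :
    ((stdBasis R m m).tensorProduct (stdBasis R n n)).equiv (stdBasis R (m × n) (m × n))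
      (Equiv.prodProdProdComm _ _ _ _) (P ⊗ₜ[R] Q) = P ⊗ₖ Q := by
  set b := (stdBasis R m m).tensorProduct (stdBasis R n n)
  suffices h : (b.equiv (stdBasis R (m × n) (m × n)) (Equiv.prodProdProdComm _ _ _ _)).toLinearMap =
      TensorProduct.lift (kroneckerBilinear (R := R) (α := R)) from
    LinearMap.congr_fun h (P ⊗ₜ[R] Q)
  refine b.ext fun ⟨⟨i, j⟩, ⟨k, l⟩⟩ => ?_
  rw [LinearEquiv.coe_coe, Module.Basis.equiv_apply, Module.Basis.tensorProduct_apply,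
    TensorProduct.lift.tmul]
  simp [kroneckerBilinear, stdBasis_eq_single, single_kronecker_single]

end CommSemiring

theorem PosSemidef.exists_posSemidef_submatrix_eq {R : Type*} [Ring R] [PartialOrder R]
    [StarRing R] {κ ι : Type*} [Fintype κ] [Fintype ι] {ρ : Matrix κ κ R} (hρ : ρ.PosSemidef)
    {e : κ → ι} (he : Function.Injective e) :
    ∃ σ : Matrix ι ι R, σ.PosSemidef ∧ σ.submatrix e e = ρ := by
  classical
  set E : Matrix κ ι R := (1 : Matrix ι ι R).submatrix e id
  refine ⟨Eᴴ * ρ * E, hρ.conjTranspose_mul_mul_same E, ?_⟩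
  have hE : E.submatrix id e = 1 := submatrix_one e he
  rw [submatrix_mul _ _ _ id _ Function.bijective_id,
    submatrix_mul _ _ _ id _ Function.bijective_id, hE, ← conjTranspose_submatrix, hE]
  simp

theorem posSemidef_sliceMap_of_injective {R : Type*} [CommRing R] [PartialOrder R] [StarRing R]
    {m n ι κ : Type*} [Fintype m] [Fintype ι] [Fintype κ]
    {f : Matrix m m R →ₗ[R] Matrix n n R}
    (hf : ∀ ρ : Matrix (m × ι) (m × ι) R, ρ.PosSemidef → (sliceMap f ι ρ).PosSemidef)
    {e : κ → ι} (he : Function.Injective e) {ρ : Matrix (m × κ) (m × κ) R} (hρ : ρ.PosSemidef) :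
    (sliceMap f κ ρ).PosSemidef := by
  obtain ⟨σ, hσ, rfl⟩ := hρ.exists_posSemidef_submatrix_eq (Function.injective_id.prodMap he)
  rw [sliceMap_submatrix]
  exact (hf σ hσ).submatrix _

end Matrix

namespace HigherOrder

open scoped TensorProduct ComplexOrder Kronecker
open Matrix

variable {Λ : Type} (dm : Λ → ℕ)

theorem castL_trans {x y z : Ty Λ} (h : x = y) (h' : y = z) (v : ↑(L dm x)) :
    castL dm h' (castL dm h v) = castL dm (h.trans h') v := by
  subst h h'; rfl

theorem castL_refl {x : Ty Λ} (h : x = x) (v : ↑(L dm x)) : castL dm h v = v := rfl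

theorem matEquivL_apply {w : List Λ} (A : ↑(L dm (Ty.elem w))) : matEquivL dm w A = toMat dm A :=
  rfl

theorem mem_K_arrow_iff {a b : Ty Λ} (M : ↑(L dm (Ty.arrow a b))) :
    M ∈ K dm (Ty.arrow a b) ↔ ∀ z : Ty Λ, ∀ hz : (Ty.arrow z z).ord = (Ty.arrow a b).ord,
      ∀ ρ ∈ K dm (a.par z),
        app dm (castL dm (Ty.par_arrow_arrow hz.symm) (parMap dm M (idL dm z))) ρ ∈
          K dm (b.par z) := by
  rw [K]; rfl

theorem app_castL_parMap_idL {a b z : Ty Λ} (hz : (Ty.arrow z z).ord = (Ty.arrow a b).ord)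
    (M : ↑(L dm (Ty.arrow a b))) (ρ : ↑(L dm (a.par z))) :
    app dm (castL dm (Ty.par_arrow_arrow hz.symm) (parMap dm M (idL dm z))) ρ =
      parEquiv dm b z ((toHom dm M).rTensor ↑(L dm z) ((parEquiv dm a z).symm ρ)) := by
  rw [parMap, parEquiv, dif_neg (by omega), dif_pos hz.symm]
  simp only [LinearEquiv.trans_apply, TensorProduct.congr_tmul, castL_trans, castL_refl,
    homTensorHomEquiv_apply, TensorProduct.homTensorHomMap_apply]
  rfl

def finProdFinDimwEquiv (v w : List Λ) :
    Fin (dimw dm v) × Fin (dimw dm w) ≃ Fin (dimw dm (v ++ w)) :=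
  finProdFinEquiv.trans (finCongr (dimw_append dm v w).symm)

noncomputable def elemParEquiv (v w : List Λ) :
    ↑(L dm ((Ty.elem v).par (Ty.elem w))) ≃ₗ[ℂ]
      Matrix (Fin (dimw dm v) × Fin (dimw dm w)) (Fin (dimw dm v) × Fin (dimw dm w)) ℂ :=
  castL dm (Ty.par_elem_elem v w) ≪≫ₗ matEquivL dm (v ++ w) ≪≫ₗ
    reindexLinearEquiv ℂ ℂ (finProdFinDimwEquiv dm v w).symm (finProdFinDimwEquiv dm v w).symm

theorem mem_K_of_eq_elem {x : Ty Λ} {w : List Λ} (h : x = Ty.elem w) (ρ : ↑(L dm x)) :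
    ρ ∈ K dm x ↔ (toMat dm (castL dm h ρ)).PosSemidef := by
  subst h; rw [K]; rfl

theorem mem_K_par_elem_iff (v w : List Λ) (ρ : ↑(L dm ((Ty.elem v).par (Ty.elem w)))) :
    ρ ∈ K dm ((Ty.elem v).par (Ty.elem w)) ↔ (elemParEquiv dm v w ρ).PosSemidef := by
  rw [mem_K_of_eq_elem dm (Ty.par_elem_elem v w)]
  exact (posSemidef_submatrix_equiv (finProdFinDimwEquiv dm v w)).symm

theorem elemParEquiv_parEquiv_tmul (v w : List Λ) (P : ↑(L dm (Ty.elem v)))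
    (Q : ↑(L dm (Ty.elem w))) :
    elemParEquiv dm v w (parEquiv dm (Ty.elem v) (Ty.elem w) (P ⊗ₜ[ℂ] Q)) =
      toMat dm P ⊗ₖ toMat dm Q := by
  rw [parEquiv]
  simp only [elemParEquiv, LinearEquiv.trans_apply, TensorProduct.congr_tmul, castL_trans,
    castL_refl, LinearEquiv.apply_symm_apply]
  rw [stdBasis_tensorProduct_equiv_tmul]
  ext p q
  simp [finProdFinDimwEquiv, matEquivL_apply]

noncomputable def matHom (v w : List Λ) (f : ↑(L dm (Ty.elem v)) →ₗ[ℂ] ↑(L dm (Ty.elem w))) :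
    Matrix (Fin (dimw dm v)) (Fin (dimw dm v)) ℂ →ₗ[ℂ]
      Matrix (Fin (dimw dm w)) (Fin (dimw dm w)) ℂ :=
  LinearEquiv.arrowCongr (matEquivL dm v) (matEquivL dm w) f

theorem elemParEquiv_parEquiv_rTensor (A B w : List Λ)
    (f : ↑(L dm (Ty.elem A)) →ₗ[ℂ] ↑(L dm (Ty.elem B)))
    (t : ↑(L dm (Ty.elem A)) ⊗[ℂ] ↑(L dm (Ty.elem w))) :
    elemParEquiv dm B w (parEquiv dm (Ty.elem B) (Ty.elem w) (f.rTensor _ t)) =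
      sliceMap (matHom dm A B f) _ (elemParEquiv dm A w (parEquiv dm _ _ t)) := by
  induction t using TensorProduct.induction_on with
  | zero => simp only [map_zero]
  | tmul P Q =>
    rw [LinearMap.rTensor_tmul, elemParEquiv_parEquiv_tmul, elemParEquiv_parEquiv_tmul,
      sliceMap_kronecker]
    rfl
  | add s t hs ht => simp only [map_add, hs, ht]

theorem mem_K_arrow_elem_iff (A B : List Λ) (M : ↑(L dm (Ty.arrow (Ty.elem A) (Ty.elem B)))) :
    M ∈ K dm (Ty.arrow (Ty.elem A) (Ty.elem B)) ↔
      ∀ (w : List Λ) (ρ : Matrix (Fin (dimw dm A) × Fin (dimw dm w))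
        (Fin (dimw dm A) × Fin (dimw dm w)) ℂ),
        ρ.PosSemidef → (sliceMap (matHom dm A B (toHom dm M)) _ ρ).PosSemidef := by
  rw [mem_K_arrow_iff]
  constructor
  · intro hM w ρ hρ
    obtain ⟨σ, rfl⟩ := (elemParEquiv dm A w).surjective ρ
    have hz : (Ty.arrow (Ty.elem w) (Ty.elem w)).ord = (Ty.arrow (Ty.elem A) (Ty.elem B)).ord := rfl
    have hσ := hM (Ty.elem w) hz σ ((mem_K_par_elem_iff dm A w σ).2 hρ)
    rwa [mem_K_par_elem_iff, app_castL_parMap_idL dm hz, elemParEquiv_parEquiv_rTensor,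
      LinearEquiv.apply_symm_apply] at hσ
  · rintro h (w | ⟨c, d⟩) hz ρ hρ
    · rw [mem_K_par_elem_iff, app_castL_parMap_idL dm hz, elemParEquiv_parEquiv_rTensor,
        LinearEquiv.apply_symm_apply]
      exact h w _ ((mem_K_par_elem_iff dm A w ρ).1 hρ)
    · simp [Ty.ord] at hz

theorem exists_le_dimw (hC : ∃ C : Λ, 2 ≤ dm C) (k : ℕ) : ∃ w : List Λ, k ≤ dimw dm w := by
  obtain ⟨C, hC⟩ := hC
  refine ⟨List.replicate k C, ?_⟩
  calc k ≤ 2 ^ k := Nat.lt_two_pow_self.le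
    _ ≤ dm C ^ k := Nat.pow_le_pow_left hC k
    _ = dimw dm (List.replicate k C) := by simp [dimw]

end HigherOrder

open HigherOrder in
open scoped ComplexOrder in
/-- For elementary types `A` and `B` (provided the alphabet contains a label of dimension at
least two), `K (A → B)` is exactly the set of completely positive maps
`End(H_A) → End(H_B)` in the standard sense: tensoring with the identity of any
finite-dimensional Hilbert space `W = ℂ^k` sends positive semidefinite operators to
positive semidefinite operators. -/
theorem K_arrow_elem_iff_completely_positive {Λ : Type} (dm : Λ → ℕ)
    (hC : ∃ C : Λ, 2 ≤ dm C) (A B : List Λ)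
    (M : ↑(L dm (Ty.arrow (Ty.elem A) (Ty.elem B)))) :
    M ∈ K dm (Ty.arrow (Ty.elem A) (Ty.elem B)) ↔
      ∀ (k : ℕ) (ρ : Matrix (Fin (dimw dm A) × Fin k) (Fin (dimw dm A) × Fin k) ℂ),
        ρ.PosSemidef →
        (Matrix.of fun p q : Fin (dimw dm B) × Fin k =>
          toMat dm (app dm M (ofMat dm
            (Matrix.of fun s t : Fin (dimw dm A) => ρ (s, p.2) (t, q.2)))) p.1 q.1).PosSemidef := by
  rw [mem_K_arrow_elem_iff]
  -- the matrix in the `k`-th condition unfolds to `sliceMap (matHom dm A B (toHom dm M)) (Fin k) ρ`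
  constructor
  · intro hM k ρ hρ
    obtain ⟨w, hk⟩ := exists_le_dimw dm hC k
    exact Matrix.posSemidef_sliceMap_of_injective (hM w) (Fin.castLE_injective hk) hρ
  · exact fun h w => h (dimw dm w)
end
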